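/- arXiv:1608.08113 — 4 statements merged into one kernel-verified Lean document; each statement's English description precedes it below -/
import Mathlib

section
/- Let a0, a1, a2 be distinct negative real numbers. Then for every n ∈ ℕ, 1/((n−a0)(n−a1)(n−a2)) = ∫_0^1 t^n w(t) dt, where w(t) = t^{−a0−1}/((a0−a1)(a0−a2)) + t^{−a1−1}/((a1−a0)(a1−a2)) + t^{−a2−1}/((a2−a0)(a2−a1)) for t ∈ (0,1]. -/
open MeasureTheory

lemma aux_integrable (a : ℝ) (ha : a < 0) (n : ℕ) :
    IntegrableOn (fun t : ℝ => t ^ (n : ℕ) * t ^ (-a - 1)) (Set.Ioc (0:ℝ) 1) := by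
  have h : IntegrableOn (fun t : ℝ => t ^ ((n : ℝ) - a - 1)) (Set.Ioc (0:ℝ) 1) := by
    rw [← intervalIntegrable_iff_integrableOn_Ioc_of_le (by norm_num : (0:ℝ) ≤ 1)]
    apply intervalIntegral.intervalIntegrable_rpow'
    have : (0:ℝ) ≤ (n:ℝ) := Nat.cast_nonneg n
    linarith
  apply h.congr_fun _ measurableSet_Ioc
  intro t ht
  dsimp only
  rw [← Real.rpow_natCast t n, ← Real.rpow_add ht.1]
  ring_nf

lemma aux_integral (a : ℝ) (ha : a < 0) (n : ℕ) :
    ∫ t in Set.Ioc (0:ℝ) 1, t ^ (n : ℕ) * t ^ (-a - 1) = 1 / ((n : ℝ) - a) := by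
  have hpos : (0:ℝ) < (n:ℝ) - a := by
    have : (0:ℝ) ≤ (n:ℝ) := Nat.cast_nonneg n
    linarith
  have hcongr : ∫ t in Set.Ioc (0:ℝ) 1, t ^ (n : ℕ) * t ^ (-a - 1)
      = ∫ t in Set.Ioc (0:ℝ) 1, t ^ ((n : ℝ) - a - 1) := by
    apply setIntegral_congr_fun measurableSet_Ioc
    intro t ht
    dsimp only
    rw [← Real.rpow_natCast t n, ← Real.rpow_add ht.1]
    ring_nf
  rw [hcongr, ← intervalIntegral.integral_of_le (by norm_num : (0:ℝ) ≤ 1)]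
  rw [integral_rpow (Or.inl (by linarith : (-1:ℝ) < (n:ℝ) - a - 1))]
  have h1 : (1:ℝ) ^ ((n : ℝ) - a - 1 + 1) = 1 := Real.one_rpow _
  have h0 : (0:ℝ) ^ ((n : ℝ) - a - 1 + 1) = 0 := Real.zero_rpow (by linarith)
  rw [h1, h0]
  ring_nf

theorem moment_distinct_real_roots (a0 a1 a2 : ℝ) (h0 : a0 < 0) (h1 : a1 < 0) (h2 : a2 < 0)
    (h01 : a0 ≠ a1) (h02 : a0 ≠ a2) (h12 : a1 ≠ a2) (n : ℕ) :
    1 / (((n : ℝ) - a0) * ((n : ℝ) - a1) * ((n : ℝ) - a2)) =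
    ∫ t in Set.Ioc (0 : ℝ) 1, t ^ (n : ℕ) *
      (t ^ (-a0 - 1) / ((a0 - a1) * (a0 - a2)) +
       t ^ (-a1 - 1) / ((a1 - a0) * (a1 - a2)) +
       t ^ (-a2 - 1) / ((a2 - a0) * (a2 - a1))) := by
  have c0 : ((a0 - a1) * (a0 - a2)) ≠ 0 :=
    mul_ne_zero (sub_ne_zero.mpr h01) (sub_ne_zero.mpr h02)
  have c1 : ((a1 - a0) * (a1 - a2)) ≠ 0 :=
    mul_ne_zero (sub_ne_zero.mpr h01.symm) (sub_ne_zero.mpr h12)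
  have c2 : ((a2 - a0) * (a2 - a1)) ≠ 0 :=
    mul_ne_zero (sub_ne_zero.mpr h02.symm) (sub_ne_zero.mpr h12.symm)
  have hi0 := aux_integrable a0 h0 n
  have hi1 := aux_integrable a1 h1 n
  have hi2 := aux_integrable a2 h2 n
  have key : ∫ t in Set.Ioc (0 : ℝ) 1, t ^ (n : ℕ) *
      (t ^ (-a0 - 1) / ((a0 - a1) * (a0 - a2)) +
       t ^ (-a1 - 1) / ((a1 - a0) * (a1 - a2)) +
       t ^ (-a2 - 1) / ((a2 - a0) * (a2 - a1)))
      = (∫ t in Set.Ioc (0:ℝ) 1, t ^ (n:ℕ) * t ^ (-a0 - 1)) * ((a0 - a1) * (a0 - a2))⁻¹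
      + (∫ t in Set.Ioc (0:ℝ) 1, t ^ (n:ℕ) * t ^ (-a1 - 1)) * ((a1 - a0) * (a1 - a2))⁻¹
      + (∫ t in Set.Ioc (0:ℝ) 1, t ^ (n:ℕ) * t ^ (-a2 - 1)) * ((a2 - a0) * (a2 - a1))⁻¹ := by
    calc ∫ t in Set.Ioc (0 : ℝ) 1, t ^ (n : ℕ) *
          (t ^ (-a0 - 1) / ((a0 - a1) * (a0 - a2)) +
           t ^ (-a1 - 1) / ((a1 - a0) * (a1 - a2)) +
           t ^ (-a2 - 1) / ((a2 - a0) * (a2 - a1)))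
        = ∫ t in Set.Ioc (0 : ℝ) 1,
            (t ^ (n:ℕ) * t ^ (-a0 - 1) * ((a0 - a1) * (a0 - a2))⁻¹
           + t ^ (n:ℕ) * t ^ (-a1 - 1) * ((a1 - a0) * (a1 - a2))⁻¹
           + t ^ (n:ℕ) * t ^ (-a2 - 1) * ((a2 - a0) * (a2 - a1))⁻¹) := by
          apply setIntegral_congr_fun measurableSet_Ioc
          intro t ht
          dsimp only
          ring
      _ = (∫ t in Set.Ioc (0:ℝ) 1, t ^ (n:ℕ) * t ^ (-a0 - 1)) * ((a0 - a1) * (a0 - a2))⁻¹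
        + (∫ t in Set.Ioc (0:ℝ) 1, t ^ (n:ℕ) * t ^ (-a1 - 1)) * ((a1 - a0) * (a1 - a2))⁻¹
        + (∫ t in Set.Ioc (0:ℝ) 1, t ^ (n:ℕ) * t ^ (-a2 - 1)) * ((a2 - a0) * (a2 - a1))⁻¹ := by
          have j0 : IntegrableOn
              (fun t : ℝ => t ^ (n:ℕ) * t ^ (-a0 - 1) * ((a0 - a1) * (a0 - a2))⁻¹)
              (Set.Ioc (0:ℝ) 1) := hi0.mul_const _
          have j1 : IntegrableOn
              (fun t : ℝ => t ^ (n:ℕ) * t ^ (-a1 - 1) * ((a1 - a0) * (a1 - a2))⁻¹)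
              (Set.Ioc (0:ℝ) 1) := hi1.mul_const _
          have j2 : IntegrableOn
              (fun t : ℝ => t ^ (n:ℕ) * t ^ (-a2 - 1) * ((a2 - a0) * (a2 - a1))⁻¹)
              (Set.Ioc (0:ℝ) 1) := hi2.mul_const _
          have j01 : IntegrableOn
              (fun t : ℝ => t ^ (n:ℕ) * t ^ (-a0 - 1) * ((a0 - a1) * (a0 - a2))⁻¹
                 + t ^ (n:ℕ) * t ^ (-a1 - 1) * ((a1 - a0) * (a1 - a2))⁻¹)
              (Set.Ioc (0:ℝ) 1) := j0.add j1
          rw [← integral_mul_const, ← integral_mul_const, ← integral_mul_const,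
              ← integral_add j0 j1, ← integral_add j01 j2]
  rw [key, aux_integral a0 h0 n, aux_integral a1 h1 n, aux_integral a2 h2 n]
  have n0 : ((n:ℝ) - a0) ≠ 0 := by
    have : (0:ℝ) ≤ (n:ℝ) := Nat.cast_nonneg n
    intro h; linarith [sub_eq_zero.mp h]
  have n1 : ((n:ℝ) - a1) ≠ 0 := by
    have : (0:ℝ) ≤ (n:ℝ) := Nat.cast_nonneg n
    intro h; linarith [sub_eq_zero.mp h]
  have n2 : ((n:ℝ) - a2) ≠ 0 := by
    have : (0:ℝ) ≤ (n:ℝ) := Nat.cast_nonneg n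
    intro h; linarith [sub_eq_zero.mp h]
  field_simp
  ring
end

section
/- Let a0 < 0 be real and let a1 = a + ib, a2 = a − ib with a < 0 and b > 0. Then for every n ∈ ℕ, 1/((n−a0)(n−a1)(n−a2)) = ∫_0^1 t^n w(t) dt, where w(t) = (1/((a0−a)² + b²))·( t^{−a0−1} − (√((a0−a)²+b²)/b) · t^{−a−1} sin(b·log t + θ) ) and θ is the principal argument of a1 − a0. -/
/-!
Every term of the integrand is a power `t ^ s`, possibly twisted by `sin (b log t + φ)`, and
`∫₀¹ t ^ s dt = 1 / (s + 1)` for `Re s > -1`. Writing `t ^ c sin (b log t + φ)` as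
`Im (e^{iφ} t ^ (c + ib))` turns the twisted moments into `Im (e^{iφ} / (c + 1 + ib))`. With
`cos θ` and `sin θ` read off from `a₁ - a₀ = √D e^{iθ}`, the moment of `w` becomes
`(1 / D) (1 / (n - a₀) - (n - 2a + a₀) / E)` with `E = (n - a)² + b² = (n - a₁)(n - a₂)`,
which is `1 / ((n - a₀) E)` because `E - (n - a₀)(n - 2a + a₀) = (a - a₀)² + b² = D`.
-/

open MeasureTheory Real Complex Set

theorem integrableOn_Ioc_zero_one_cpow {r : ℂ} (hr : -1 < r.re) :
    IntegrableOn (fun t : ℝ => (t : ℂ) ^ r) (Ioc 0 1) :=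
  (intervalIntegrable_iff_integrableOn_Ioc_of_le zero_le_one).mp
    (intervalIntegral.intervalIntegrable_cpow' hr)

theorem setIntegral_Ioc_zero_one_cpow {r : ℂ} (hr : -1 < r.re) :
    ∫ t in Ioc (0 : ℝ) 1, (t : ℂ) ^ r = 1 / (r + 1) := by
  have hr1 : r + 1 ≠ 0 := fun h => by
    have := congrArg Complex.re h
    simp only [add_re, one_re, zero_re] at this
    linarith
  rw [← intervalIntegral.integral_of_le zero_le_one, integral_cpow (Or.inl hr)]
  simp [Complex.zero_cpow hr1]

theorem integrableOn_Ioc_zero_one_rpow {c : ℝ} (hc : -1 < c) :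
    IntegrableOn (fun t : ℝ => t ^ c) (Ioc 0 1) :=
  (intervalIntegrable_iff_integrableOn_Ioc_of_le zero_le_one).mp
    (intervalIntegral.intervalIntegrable_rpow' hc)

theorem setIntegral_Ioc_zero_one_rpow {c : ℝ} (hc : -1 < c) :
    ∫ t in Ioc (0 : ℝ) 1, t ^ c = 1 / (c + 1) := by
  have hc1 : c + 1 ≠ 0 := by linarith
  rw [← intervalIntegral.integral_of_le zero_le_one, integral_rpow (Or.inl hc)]
  simp [Real.zero_rpow hc1]

theorem rpow_mul_sin_log_add_eq_im {t : ℝ} (ht : 0 < t) (c b φ : ℝ) :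
    t ^ c * Real.sin (b * Real.log t + φ) =
      (cexp (φ * I) * (t : ℂ) ^ ((c : ℂ) + b * I)).im := by
  rw [cpow_def_of_ne_zero (ofReal_ne_zero.mpr ht.ne'), ← Complex.exp_add, exp_im,
    ← ofReal_log ht.le, Real.rpow_def_of_pos ht]
  simp only [add_re, add_im, mul_re, mul_im, ofReal_re, ofReal_im, I_re, I_im]
  ring_nf

theorem integrableOn_Ioc_zero_one_rpow_mul_sin_log_add {c : ℝ} (hc : -1 < c) (b φ : ℝ) :
    IntegrableOn (fun t : ℝ => t ^ c * Real.sin (b * Real.log t + φ)) (Ioc 0 1) := by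
  have h := ((integrableOn_Ioc_zero_one_cpow (r := (c : ℂ) + b * I) (by simpa using hc)).const_mul
    (cexp (φ * I))).im
  exact IntegrableOn.congr_fun h (fun _ ht => (rpow_mul_sin_log_add_eq_im ht.1 c b φ).symm)
    measurableSet_Ioc

theorem setIntegral_Ioc_zero_one_rpow_mul_sin_log_add {c : ℝ} (hc : -1 < c) (b φ : ℝ) :
    ∫ t in Ioc (0 : ℝ) 1, t ^ c * Real.sin (b * Real.log t + φ) =
      ((c + 1) * Real.sin φ - b * Real.cos φ) / ((c + 1) ^ 2 + b ^ 2) := by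
  have hr : -1 < ((c : ℂ) + b * I).re := by simpa using hc
  have h_im := integral_im ((integrableOn_Ioc_zero_one_cpow hr).const_mul (cexp (φ * I)))
  simp only [RCLike.im_to_complex] at h_im
  rw [setIntegral_congr_fun measurableSet_Ioc
      (fun _ ht => rpow_mul_sin_log_add_eq_im ht.1 c b φ), h_im,
    integral_const_mul, setIntegral_Ioc_zero_one_cpow hr]
  simp [exp_ofReal_mul_I_re, exp_ofReal_mul_I_im, normSq_apply]
  ring

theorem sub_mul_sub_mul_sub_conj_eq_ofReal (x a0 a b : ℝ) :
    ((x : ℂ) - a0) * (x - (a + b * I)) * (x - (a - b * I)) =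
      (((x - a0) * ((x - a) ^ 2 + b ^ 2) : ℝ) : ℂ) := by
  push_cast
  linear_combination (-((x : ℂ) - a0) * b ^ 2) * I_sq

theorem cos_arg_ofReal_add_mul_I {x y : ℝ} (hy : y ≠ 0) :
    Real.cos (arg (x + y * I)) = x / √(x ^ 2 + y ^ 2) := by
  have hz : (x : ℂ) + y * I ≠ 0 := fun h => hy (by simpa using congrArg Complex.im h)
  rw [cos_arg hz, norm_add_mul_I]
  simp

theorem sin_arg_ofReal_add_mul_I (x y : ℝ) :
    Real.sin (arg (x + y * I)) = y / √(x ^ 2 + y ^ 2) := by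
  rw [sin_arg, norm_add_mul_I]
  simp

theorem moment_complex_roots (a0 a b : ℝ) (h0 : a0 < 0) (ha : a < 0) (hb : 0 < b)
    (θ : ℝ) (hθ : θ = Complex.arg ((a : ℂ) + b * Complex.I - a0)) (n : ℕ) :
    (1 / (((n : ℂ) - a0) * ((n : ℂ) - ((a : ℂ) + b * Complex.I)) *
        ((n : ℂ) - ((a : ℂ) - b * Complex.I))) : ℂ) =
    ((∫ t in Set.Ioc (0 : ℝ) 1, t ^ (n : ℕ) *
      ((1 / ((a0 - a) ^ 2 + b ^ 2)) *
        (t ^ (-a0 - 1) -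
         (Real.sqrt ((a0 - a) ^ 2 + b ^ 2) / b) * t ^ (-a - 1) *
           Real.sin (b * Real.log t + θ)))) : ℝ) := by
  have hn0 : -1 < (n : ℝ) - a0 - 1 := by linarith [n.cast_nonneg (α := ℝ)]
  have hna : -1 < (n : ℝ) - a - 1 := by linarith [n.cast_nonneg (α := ℝ)]
  set D := (a0 - a) ^ 2 + b ^ 2 with hD
  have h_split : EqOn
      (fun t : ℝ => t ^ n * ((1 / D) * (t ^ (-a0 - 1) -
        (√D / b) * t ^ (-a - 1) * Real.sin (b * Real.log t + θ))))
      (fun t => 1 / D * t ^ ((n : ℝ) - a0 - 1) -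
        √D / (b * D) * (t ^ ((n : ℝ) - a - 1) * Real.sin (b * Real.log t + θ))) (Ioc 0 1) := by
    intro t ht
    have h_pow (x : ℝ) : t ^ ((n : ℝ) - x - 1) = t ^ n * t ^ (-x - 1) := by
      rw [← Real.rpow_natCast, ← Real.rpow_add ht.1]
      ring_nf
    simp only [h_pow]
    field_simp
  have h_polar : (a : ℂ) + b * I - a0 = ((a - a0 : ℝ) : ℂ) + b * I := by push_cast; ring
  rw [setIntegral_congr_fun measurableSet_Ioc h_split,
    integral_sub ((integrableOn_Ioc_zero_one_rpow hn0).const_mul _)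
      ((integrableOn_Ioc_zero_one_rpow_mul_sin_log_add hna b θ).const_mul _),
    integral_const_mul, integral_const_mul, setIntegral_Ioc_zero_one_rpow hn0,
    setIntegral_Ioc_zero_one_rpow_mul_sin_log_add hna, hθ, h_polar,
    cos_arg_ofReal_add_mul_I hb.ne', sin_arg_ofReal_add_mul_I, sub_sq_comm a a0,
    ← ofReal_natCast, sub_mul_sub_mul_sub_conj_eq_ofReal, ← ofReal_one, ← ofReal_div, ofReal_inj]
  have hD_pos : 0 < D := by positivity
  have hn0' : (n : ℝ) - a0 ≠ 0 := by linarith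
  rw [← hD, sub_add_cancel, sub_add_cancel]
  field_simp
  linear_combination hD
end

section
/- Let a < −1, b > 0 and let θ ∈ (π/2, π) be the principal argument of (a+1) + ib. Then F(t) := t^{a+1} − sin(b·log t + θ)/sin θ is nonnegative for all t ∈ (0,1]. -/
/-!
Put `x = -b log t ≥ 0` and `k = -(a + 1)/b ≥ 0`. Since `cot θ = (a + 1)/b`, the claim becomes
`cos x + k sin x ≤ exp (k x)`, which follows from `cos x ≤ 1`, `sin x ≤ x` and `1 + k x ≤ exp (k x)`.
-/

open Real

lemma Real.cos_add_mul_sin_le_exp_mul {k x : ℝ} (hk : 0 ≤ k) (hx : 0 ≤ x) :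
    cos x + k * sin x ≤ exp (k * x) :=
  calc cos x + k * sin x ≤ 1 + k * x := add_le_add (cos_le_one x) (by gcongr; exact sin_le hx)
    _ ≤ exp (k * x) := by linarith [add_one_le_exp (k * x)]

lemma Real.sin_add_div_sin {θ : ℝ} (x : ℝ) (hθ : sin θ ≠ 0) :
    sin (x + θ) / sin θ = cos x + cot θ * sin x := by
  rw [sin_add, cot_eq_cos_div_sin]
  field_simp
  ring

lemma Complex.cot_arg (z : ℂ) : Real.cot (arg z) = z.re / z.im := by
  rcases eq_or_ne z 0 with rfl | hz
  · simp [Real.cot_eq_cos_div_sin]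
  rw [Real.cot_eq_cos_div_sin, cos_arg hz, sin_arg, div_div_div_cancel_right₀ (by simpa using hz)]

theorem F_nonneg (a b θ : ℝ) (ha : a < -1) (hb : 0 < b)
    (hθ : θ = Complex.arg (((a + 1 : ℝ) : ℂ) + b * Complex.I)) :
    ∀ t ∈ Set.Ioc (0 : ℝ) 1,
      0 ≤ t ^ (a + 1) - Real.sin (b * Real.log t + θ) / Real.sin θ := by
  rintro t ⟨ht0, ht1⟩
  have hsin : 0 < sin θ := by
    rw [hθ, Complex.sin_arg]
    have hz : ((a + 1 : ℝ) : ℂ) + b * Complex.I ≠ 0 := fun h => by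
      simpa [hb.ne'] using congrArg Complex.im h
    exact div_pos (by simpa using hb) (norm_pos_iff.mpr hz)
  have hcot : cot θ = (a + 1) / b := by simp [hθ, Complex.cot_arg]
  have key := cos_add_mul_sin_le_exp_mul (k := -(a + 1) / b) (x := -(b * log t))
    (div_nonneg (by linarith) hb.le) (by nlinarith [log_nonpos ht0.le ht1])
  rw [sub_nonneg, sin_add_div_sin _ hsin.ne', hcot, rpow_def_of_pos ht0]
  convert key using 2
  · rw [cos_neg]
  · rw [sin_neg]; ring
  · field_simp
end

section
/- Let −1 < a < 0, b > 0, and let θ ∈ (0, π/2) be the principal argument of (a+1) + ib. Then there exists t ∈ (0,1) with t^{a+1} − sin(b·log t + θ)/sin θ < 0; in fact, F(t) < 0 for t = e^{(2mπ + π/2 − θ)/b} whenever m ∈ ℤ is chosen so that t < 1 and t^{a+1} < 1/(2 sin θ). -/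
open Real

theorem F_negative_somewhere (a b θ : ℝ) (ha1 : -1 < a) (ha2 : a < 0) (hb : 0 < b)
    (hθ : θ = Complex.arg (((a + 1 : ℝ) : ℂ) + b * Complex.I)) :
    (∃ t ∈ Set.Ioo (0 : ℝ) 1,
      t ^ (a + 1) - Real.sin (b * Real.log t + θ) / Real.sin θ < 0) ∧
    ∀ m : ℤ, ∀ t : ℝ, t = Real.exp ((2 * m * π + π / 2 - θ) / b) → t < 1 →
      t ^ (a + 1) < 1 / (2 * Real.sin θ) →
      t ^ (a + 1) - Real.sin (b * Real.log t + θ) / Real.sin θ < 0 := by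
  have ha1' : 0 < a + 1 := by linarith
  have hre : (0:ℝ) < ((((a + 1 : ℝ) : ℂ) + b * Complex.I)).re := by simp [ha1']
  have him : (((a + 1 : ℝ) : ℂ) + b * Complex.I).im = b := by simp
  have hθpos : 0 < θ := by
    rw [hθ]
    refine lt_of_le_of_ne (Complex.arg_nonneg_iff.2 (by rw [him]; exact hb.le)) fun h => ?_
    have h2 := Complex.arg_eq_zero_iff.1 h.symm
    rw [him] at h2
    exact hb.ne' h2.2
  have hθlt : θ < π / 2 := by
    rw [hθ]
    exact Complex.arg_lt_pi_div_two_iff.2 (Or.inl hre)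
  have hπ := Real.pi_pos
  have hsin : 0 < Real.sin θ := Real.sin_pos_of_pos_of_lt_pi hθpos (by linarith)
  have key : ∀ m : ℤ, ∀ t : ℝ, t = Real.exp ((2 * m * π + π / 2 - θ) / b) → t < 1 →
      t ^ (a + 1) < 1 / (2 * Real.sin θ) →
      t ^ (a + 1) - Real.sin (b * Real.log t + θ) / Real.sin θ < 0 := by
    intro m t ht _ hsmall
    have hlog : Real.log t = (2 * m * π + π / 2 - θ) / b := by rw [ht, Real.log_exp]
    have hsin1 : Real.sin (b * Real.log t + θ) = 1 := by
      rw [hlog]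
      have h : b * ((2 * m * π + π / 2 - θ) / b) + θ = π / 2 + m * (2 * π) := by
        field_simp; ring
      rw [h, Real.sin_add_int_mul_two_pi, Real.sin_pi_div_two]
    rw [hsin1]
    have h2 : 1 / (2 * Real.sin θ) < 1 / Real.sin θ :=
      one_div_lt_one_div_of_lt hsin (by linarith)
    linarith
  refine ⟨?_, key⟩
  set L := Real.log (1 / (2 * Real.sin θ)) with hL
  set c := min (-1 : ℝ) (L / (a + 1) - 1) with hc
  set m : ℤ := ⌊(b * c + θ - π / 2) / (2 * π)⌋ with hm
  set x := (2 * (m : ℝ) * π + π / 2 - θ) / b with hx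
  have hxc : x ≤ c := by
    have h1 : (m : ℝ) ≤ (b * c + θ - π / 2) / (2 * π) := Int.floor_le _
    have h2 : (m : ℝ) * (2 * π) ≤ b * c + θ - π / 2 := by
      rw [← le_div_iff₀ (by positivity)]; exact h1
    rw [hx, div_le_iff₀ hb]; linarith
  have hx0 : x < 0 := lt_of_le_of_lt hxc (lt_of_le_of_lt (min_le_left _ _) (by norm_num))
  have ht1 : Real.exp x < 1 := Real.exp_lt_one_iff.mpr hx0
  have hpow : (Real.exp x) ^ (a + 1) = Real.exp (x * (a + 1)) := by
    rw [Real.rpow_def_of_pos (Real.exp_pos x), Real.log_exp]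
  have hsmall : (Real.exp x) ^ (a + 1) < 1 / (2 * Real.sin θ) := by
    rw [hpow]
    have hR : (0:ℝ) < 1 / (2 * Real.sin θ) := by positivity
    rw [← Real.exp_log hR]
    apply Real.exp_lt_exp.mpr
    have h3 : x ≤ L / (a + 1) - 1 := hxc.trans (min_le_right _ _)
    have h4 : x * (a + 1) ≤ (L / (a + 1) - 1) * (a + 1) :=
      mul_le_mul_of_nonneg_right h3 (le_of_lt ha1')
    have h5 : (L / (a + 1) - 1) * (a + 1) = L - (a + 1) := by
      field_simp
    rw [← hL]
    linarith
  exact ⟨Real.exp x, ⟨Real.exp_pos x, ht1⟩, key m _ rfl ht1 hsmall⟩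
end
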